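/- Let q, n be positive integers and b an integer. The size of the q-ary Varshamov–Tenengolts code VT_{b,q}(n) = {(s₁,…,s_n) ∈ {0,…,q−1}^n : ∑_{i=1}^{n} i·s_i ≡ b (mod n+1)} equals (1/(q(n+1))) ∑_{d ∣ n+1, gcd(d,q)=1} c_d(b)·q^{(n+1)/d}. -/

import Mathlib

open Complex Finset

/-- The Ramanujan sum `c_n(m)`. -/
noncomputable def ramanujan (n : ℕ) (m : ℤ) : ℂ :=
  ∑ j ∈ (Finset.Icc 1 n).filter fun j => Nat.gcd j n = 1,
    Complex.exp (2 * Real.pi * Complex.I * ((j : ℂ) * m) / n)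

/-- The q-ary Varshamov--Tenengolts code `VT_{b,q}(n)`. -/
def VTq (q n : ℕ) (b : ℤ) : Finset (Fin n → Fin q) :=
  Finset.univ.filter fun s =>
    ((n : ℤ) + 1) ∣ (∑ i : Fin n, ((i.val + 1) * (s i).val : ℕ) : ℤ) - b

noncomputable def eC (m : ℕ) (t : ℤ) : ℂ := Complex.exp (2 * Real.pi * Complex.I * t / m)

lemma eC_add (m : ℕ) (s t : ℤ) : eC m (s + t) = eC m s * eC m t := by
  rw [eC, eC, eC, ← Complex.exp_add]
  congr 1
  push_cast
  ring

lemma eC_zero (m : ℕ) : eC m 0 = 1 := by simp [eC]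

lemma eC_mul_self (m : ℕ) (t : ℤ) : eC m (m * t) = 1 := by
  rcases Nat.eq_zero_or_pos m with h | h
  · simp [h, eC]
  · rw [eC]
    have hm : (m:ℂ) ≠ 0 := Nat.cast_ne_zero.2 h.ne'
    have : 2 * (Real.pi:ℂ) * Complex.I * ((m:ℤ) * t : ℤ) / m = (t:ℤ) * (2 * Real.pi * Complex.I) := by
      push_cast; field_simp
    rw [this, Complex.exp_int_mul_two_pi_mul_I]

lemma eC_pow (m : ℕ) (t : ℤ) (k : ℕ) : eC m t ^ k = eC m (k * t) := by
  rw [eC, eC, ← Complex.exp_nat_mul]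
  congr 1
  push_cast
  ring

lemma eC_eq_one_iff (m : ℕ) (hm : 0 < m) (t : ℤ) : eC m t = 1 ↔ (m:ℤ) ∣ t := by
  rw [eC, Complex.exp_eq_one_iff]
  have hm : (m:ℂ) ≠ 0 := Nat.cast_ne_zero.2 hm.ne'
  have h2 : (2 * (Real.pi:ℂ) * Complex.I) ≠ 0 := by
    simp [Real.pi_ne_zero, Complex.I_ne_zero, Complex.ofReal_ne_zero]
  constructor
  · rintro ⟨k, hk⟩
    refine ⟨k, ?_⟩
    have : (t:ℂ) = k * m := by
      field_simp at hk
      have h3 : (t:ℂ) * (2 * (Real.pi:ℂ) * Complex.I) = (k * m) * (2 * (Real.pi:ℂ) * Complex.I) := by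
        rw [show (t:ℂ) * (2 * (Real.pi:ℂ) * Complex.I) = 2 * (Real.pi:ℂ) * Complex.I * t by ring, hk]; ring
      exact mul_right_cancel₀ h2 h3
    have : (t:ℤ) = k * m := by exact_mod_cast this
    rw [this]; ring
  · rintro ⟨k, hk⟩
    refine ⟨k, ?_⟩
    rw [hk]; push_cast; field_simp


lemma eC_period (m : ℕ) (t : ℤ) (s : ℤ) : eC m (t + m * s) = eC m t := by
  rw [eC_add, eC_mul_self, mul_one]

lemma sum_eC (m : ℕ) (hm : 0 < m) (a : ℤ) :
    ∑ k ∈ range m, eC m (k * a) = if (m:ℤ) ∣ a then (m:ℂ) else 0 := by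
  have hpow : ∀ k : ℕ, eC m (k * a) = eC m a ^ k := fun k => (eC_pow m a k).symm
  simp only [hpow]
  split_ifs with h
  · rw [← eC_eq_one_iff m hm a] at h
    simp [h]
  · have h1 : eC m a ≠ 1 := fun hc => h ((eC_eq_one_iff m hm a).1 hc)
    rw [geom_sum_eq h1]
    have : eC m a ^ m = 1 := by
      rw [eC_pow]
      have : (m:ℤ) * a = (m:ℤ) * a := rfl
      exact eC_mul_self m a
    rw [this, sub_self, zero_div]

/-- inner character sum -/
noncomputable def GC (q m : ℕ) (t : ℤ) : ℂ := ∑ v ∈ range q, eC m (t * v)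

lemma GC_zero (q m : ℕ) : GC q m 0 = q := by simp [GC, eC_zero]

lemma GC_period (q m : ℕ) (t s : ℤ) : GC q m (t + m * s) = GC q m t := by
  unfold GC
  refine Finset.sum_congr rfl fun v _ => ?_
  rw [show (t + m*s) * v = t*v + m * (s*v) by ring, eC_period]

lemma GC_congr (q m : ℕ) (t t' : ℤ) (h : t % m = t' % m) : GC q m t = GC q m t' := by
  have : t = t' + m * ((t - t')/m) := by
    have hd : (m:ℤ) ∣ (t - t') := Int.ModEq.dvd (Int.ModEq.symm h)
    rw [Int.mul_ediv_cancel' hd]; ring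
  rw [this, GC_period]


-- injectivity of a ↦ (c*a) % d on range d, for gcd c d = 1
lemma mul_mod_injOn (d c : ℕ) (hc : Nat.gcd c d = 1) :
    ∀ a < d, ∀ b < d, (c*a) % d = (c*b) % d → a = b := by
  intro a ha b hb h
  have : a % d = b % d := Nat.ModEq.cancel_left_of_coprime (by rwa [Nat.gcd_comm] at hc) h
  rwa [Nat.mod_eq_of_lt ha, Nat.mod_eq_of_lt hb] at this

lemma image_mul_mod (d c : ℕ) (hd : 0 < d) (hc : Nat.gcd c d = 1) (p : ℕ → Prop) [DecidablePred p]
    (hp : ∀ a < d, (p a ↔ p ((c*a) % d))) :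
    ((range d).filter p).image (fun a => (c*a) % d) = (range d).filter p := by
  apply Finset.eq_of_subset_of_card_le
  · intro x hx
    simp only [Finset.mem_image, Finset.mem_filter, Finset.mem_range] at *
    obtain ⟨a, ⟨had, hpa⟩, rfl⟩ := hx
    exact ⟨Nat.mod_lt _ hd, (hp a had).1 hpa⟩
  · rw [Finset.card_image_of_injOn]
    intro a ha b hb h
    simp only [Finset.coe_filter, Set.mem_setOf_eq, Finset.mem_range] at ha hb
    exact mul_mod_injOn d c hc a ha.1 b hb.1 h


lemma GC_geom (q m : ℕ) (t : ℤ) : GC q m t = ∑ v ∈ range q, eC m t ^ v := by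
  unfold GC
  refine Finset.sum_congr rfl fun v _ => ?_
  rw [eC_pow, mul_comm]

lemma eC_ne_one (g d : ℕ) (hg : 0 < g) (hd : 0 < d) (j : ℕ) (hj0 : j ≠ 0) (hjd : j < d) :
    eC (g*d) ((j:ℤ)*g) ≠ 1 := by
  intro hc
  have hdvd := (eC_eq_one_iff (g*d) (Nat.mul_pos hg hd) _).1 hc
  have hnat : (g*d) ∣ (j*g) := by exact_mod_cast hdvd
  have : d ∣ j := by
    rcases hnat with ⟨c, hc⟩
    exact ⟨c, by nlinarith [hc, hg]⟩
  exact hj0 (Nat.eq_zero_of_dvd_of_lt this hjd)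

lemma eC_pow_q (g d q e : ℕ) (hed : e ∣ d) (heq : e ∣ q) (he : 0 < e) :
    eC (g*d) (((d/e : ℕ):ℤ)*g) ^ q = 1 := by
  rw [eC_pow]
  have h1 : q * (d/e) = q / e * d := by
    rcases hed with ⟨a, rfl⟩
    rcases heq with ⟨b, rfl⟩
    rw [Nat.mul_div_cancel_left a he, Nat.mul_div_cancel_left b he]
    ring
  have hnat : q * ((d/e) * g) = (g*d) * (q/e) := by
    rw [← mul_assoc, h1]; ring
  rw [show (q:ℤ) * (((d/e : ℕ):ℤ)*g) = ((g*d : ℕ):ℤ) * ((q/e : ℕ):ℤ) from by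
    exact_mod_cast congrArg (fun x : ℕ => (x:ℤ)) hnat]
  exact eC_mul_self (g*d) _

lemma Q_eval (q d g : ℕ) (hq : 0 < q) (hd : 0 < d) (hg : 0 < g) :
    ∏ j ∈ range d, GC q (g*d) ((j:ℤ)*g) = if Nat.gcd d q = 1 then (q:ℂ) else 0 := by
  set m := g * d with hm
  split_ifs with h
  · -- coprime case
    have hrange : range d = insert 0 (Ico 1 d) := by ext x; simp [Finset.mem_Ico]; omega
    rw [hrange, Finset.prod_insert (by simp)]
    have hIco : Ico 1 d = (range d).filter (fun a => ¬ (a = 0)) := by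
      ext x; simp [Finset.mem_Ico]; omega
    have hqd : Nat.gcd q d = 1 := by rwa [Nat.gcd_comm]
    have hAne : (∏ j ∈ Ico 1 d, (eC m ((j:ℤ)*g) - 1)) ≠ 0 := by
      rw [Finset.prod_ne_zero_iff]
      intro j hj
      rw [Finset.mem_Ico] at hj
      exact sub_ne_zero_of_ne (eC_ne_one g d hg hd j (by omega) hj.2)
    have key : (∏ j ∈ Ico 1 d, GC q m ((j:ℤ)*g)) * (∏ j ∈ Ico 1 d, (eC m ((j:ℤ)*g) - 1))
        = ∏ j ∈ Ico 1 d, (eC m ((j:ℤ)*g) - 1) := by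
      rw [← Finset.prod_mul_distrib]
      have step1 : ∀ j ∈ Ico 1 d,
          GC q m ((j:ℤ)*g) * (eC m ((j:ℤ)*g) - 1) = eC m (((q*j % d : ℕ):ℤ)*g) - 1 := by
        intro j hj
        rw [GC_geom, geom_sum_mul, eC_pow]
        have hsplit : q*j % d + d * (q*j/d) = q * j := Nat.mod_add_div _ _
        have h2 : ((q*j % d : ℕ):ℤ) + (d:ℤ)*((q*j/d : ℕ):ℤ) = ((q*j : ℕ):ℤ) := by
          exact_mod_cast hsplit
        have harg : (q:ℤ)*((j:ℤ)*g) = ((q*j % d : ℕ):ℤ)*g + (m:ℤ) * ((q*j/d : ℕ):ℤ) :=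
          calc (q:ℤ)*((j:ℤ)*g) = ((q*j:ℕ):ℤ)*g := by push_cast; ring
            _ = (((q*j % d : ℕ):ℤ) + (d:ℤ)*((q*j/d : ℕ):ℤ))*g := by rw [h2]
            _ = ((q*j % d : ℕ):ℤ)*g + (m:ℤ) * ((q*j/d : ℕ):ℤ) := by rw [hm]; push_cast; ring
        rw [harg, eC_period m]
      rw [Finset.prod_congr rfl step1]
      have hp : ∀ a < d, ((¬ (a = 0)) ↔ ¬ ((q*a) % d = 0)) := by
        intro a ha
        constructor
        · intro h0 hc
          have hd1 : d ∣ q * a := Nat.dvd_of_mod_eq_zero hc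
          have : d ∣ a := (Nat.Coprime.dvd_of_dvd_mul_left (by rwa [Nat.gcd_comm] at hqd)) hd1
          exact h0 (Nat.eq_zero_of_dvd_of_lt this ha)
        · intro h0 hc
          subst hc
          simp at h0
      have himg := image_mul_mod d q hd hqd (fun a => ¬ (a = 0)) hp
      conv_rhs => rw [hIco, ← himg]
      rw [Finset.prod_image ?hinj]
      · rw [← hIco]
      case hinj =>
        intro a ha b hb hab
        rw [Finset.mem_coe, Finset.mem_filter, Finset.mem_range] at ha hb
        exact mul_mod_injOn d q hqd a ha.1 b hb.1 hab
    have hR1 : (∏ j ∈ Ico 1 d, GC q m ((j:ℤ)*g)) = 1 :=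
      mul_right_cancel₀ hAne (key.trans (one_mul _).symm)
    rw [hR1, mul_one, show ((0:ℕ):ℤ) * (g:ℤ) = 0 by simp, GC_zero]
  · -- non-coprime case
    set e := Nat.gcd d q with he
    have he0 : 0 < e := Nat.gcd_pos_of_pos_left q hd
    have he1 : 1 < e := by
      rcases Nat.lt_or_ge e 2 with h2 | h2
      · exfalso; apply h; omega
      · omega
    have hed : e ∣ d := Nat.gcd_dvd_left _ _
    have heq : e ∣ q := Nat.gcd_dvd_right _ _
    set j₀ := d / e with hj₀
    have hj₀pos : 0 < j₀ := Nat.div_pos (Nat.le_of_dvd hd hed) (by omega)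
    have hj₀lt : j₀ < d := Nat.div_lt_self hd he1
    apply Finset.prod_eq_zero (Finset.mem_range.2 hj₀lt)
    have hne : eC m ((j₀:ℤ)*g) ≠ 1 := eC_ne_one g d hg hd j₀ (by omega) hj₀lt
    have hpow : eC m ((j₀:ℤ)*g) ^ q = 1 := eC_pow_q g d q e hed heq (by omega)
    rw [GC_geom]
    have hsub : eC m ((j₀:ℤ)*g) - 1 ≠ 0 := sub_ne_zero_of_ne hne
    have hz : (∑ i ∈ range q, eC m ((j₀:ℤ)*g) ^ i) * (eC m ((j₀:ℤ)*g) - 1) = 0 := by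
      rw [geom_sum_mul, hpow, sub_self]
    exact (mul_eq_zero.1 hz).resolve_right hsub


lemma prod_range_mul_of_periodic {M : Type*} [CommMonoid M] (F : ℕ → M) (g d : ℕ)
    (hF : ∀ a c, F (a + c*d) = F a) :
    ∏ i ∈ range (g*d), F i = (∏ a ∈ range d, F a) ^ g := by
  rw [← Fin.prod_univ_eq_prod_range F (g*d),
    ← Equiv.prod_comp finProdFinEquiv (fun i : Fin (g*d) => F i), Fintype.prod_prod_type]
  calc ∏ c : Fin g, ∏ a : Fin d, F ((finProdFinEquiv (c, a) : Fin (g*d)) : ℕ)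
      = ∏ c : Fin g, ∏ a : Fin d, F (a:ℕ) := by
        refine Finset.prod_congr rfl fun c _ => Finset.prod_congr rfl fun a _ => ?_
        have hval : ((finProdFinEquiv (c, a) : Fin (g*d)) : ℕ) = (a:ℕ) + (c:ℕ) * d := by
          simp [finProdFinEquiv]; ring
        rw [hval]
        exact hF _ _
    _ = ∏ c : Fin g, ∏ a ∈ range d, F a := by
        refine Finset.prod_congr rfl fun c _ => Fin.prod_univ_eq_prod_range F d
    _ = (∏ a ∈ range d, F a) ^ g := by
        rw [Finset.prod_const, Finset.card_univ, Fintype.card_fin]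

lemma prod_GC (q m k : ℕ) (hq : 0 < q) (hm : 0 < m) :
    ∏ i ∈ range m, GC q m ((k:ℤ)*i)
      = (if Nat.gcd (m / Nat.gcd k m) q = 1 then (q:ℂ) else 0) ^ (Nat.gcd k m) := by
  set g := Nat.gcd k m with hgdef
  set d := m / g with hddef
  have hg : 0 < g := Nat.gcd_pos_of_pos_right k hm
  have hgd : g * d = m := Nat.mul_div_cancel' (Nat.gcd_dvd_right k m)
  have hd : 0 < d := Nat.div_pos (Nat.le_of_dvd hm (Nat.gcd_dvd_right k m)) hg
  set k' := k / g with hk'def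
  have hk' : g * k' = k := Nat.mul_div_cancel' (Nat.gcd_dvd_left k m)
  have hcop : Nat.gcd k' d = 1 := Nat.coprime_div_gcd_div_gcd hg
  have hkd : k * d = m * k' := by rw [← hk', ← hgd]; ring
  -- Step A
  have hFper : ∀ a c : ℕ, GC q m ((k:ℤ)*((a + c*d : ℕ):ℤ)) = GC q m ((k:ℤ)*a) := by
    intro a c
    have hnat : k*(a + c*d) = k*a + m*(k'*c) := by
      have : k*(c*d) = m*(k'*c) := by
        calc k*(c*d) = (k*d)*c := by ring
          _ = (m*k')*c := by rw [hkd]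
          _ = m*(k'*c) := by ring
      rw [Nat.mul_add, this]
    have : (k:ℤ)*((a + c*d : ℕ):ℤ) = (k:ℤ)*a + (m:ℤ)*((k':ℤ)*c) := by
      exact_mod_cast congrArg (fun x : ℕ => (x:ℤ)) hnat
    rw [this, GC_period]
  have stepA : ∏ i ∈ range m, GC q m ((k:ℤ)*i)
      = (∏ a ∈ range d, GC q m ((k:ℤ)*a)) ^ g := by
    calc ∏ i ∈ range m, GC q m ((k:ℤ)*i)
        = ∏ i ∈ range (g*d), GC q m ((k:ℤ)*i) := by rw [hgd]
      _ = (∏ a ∈ range d, GC q m ((k:ℤ)*a)) ^ g :=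
        prod_range_mul_of_periodic (fun i => GC q m ((k:ℤ)*i)) g d hFper
  -- Step B
  have stepB : ∏ a ∈ range d, GC q m ((k:ℤ)*a) = ∏ j ∈ range d, GC q m ((j:ℤ)*g) := by
    have hterm : ∀ a ∈ range d, GC q m ((k:ℤ)*a) = GC q m (((k'*a % d : ℕ):ℤ)*g) := by
      intro a ha
      have hnat : k*a = (k'*a % d)*g + m*(k'*a/d) := by
        have h1 : k*a = g*(k'*a) := by rw [← hk']; ring
        have h2 : k'*a = k'*a % d + d*(k'*a/d) := (Nat.mod_add_div _ _).symm
        calc k*a = g*(k'*a % d + d*(k'*a/d)) := by rw [h1, ← h2]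
          _ = (k'*a % d)*g + (g*d)*(k'*a/d) := by ring
          _ = (k'*a % d)*g + m*(k'*a/d) := by rw [hgd]
      have : (k:ℤ)*(a:ℕ) = ((k'*a % d : ℕ):ℤ)*g + (m:ℤ)*((k'*a/d : ℕ):ℤ) := by
        exact_mod_cast congrArg (fun x : ℕ => (x:ℤ)) hnat
      rw [this, GC_period]
    rw [Finset.prod_congr rfl hterm]
    have hp : ∀ a < d, (True ↔ True) := fun _ _ => Iff.rfl
    have himg := image_mul_mod d k' hd hcop (fun _ => True) hp
    rw [Finset.filter_true] at himg
    conv_rhs => rw [← himg]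
    rw [Finset.prod_image ?hinj]
    case hinj =>
      intro a ha b hb hab
      rw [Finset.mem_coe, Finset.mem_range] at ha hb
      exact mul_mod_injOn d k' hcop a ha b hb hab
  rw [stepA, stepB, ← hgd, Q_eval q d g hq hd hg]


lemma eC_sum (m : ℕ) {ι : Type*} (t : Finset ι) (f : ι → ℤ) :
    eC m (∑ i ∈ t, f i) = ∏ i ∈ t, eC m (f i) := by
  classical
  induction t using Finset.induction with
  | empty => simp [eC_zero]
  | insert _ _ h ih => rw [Finset.sum_insert h, eC_add, Finset.prod_insert h, ih]

lemma card_VTq (q n : ℕ) (hq : 0 < q) (b : ℤ) :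
    ((n+1 : ℕ):ℂ) * (VTq q n b).card
      = ∑ k ∈ range (n+1), eC (n+1) (-((k:ℤ)*b)) * ∏ i : Fin n, GC q (n+1) ((k:ℤ)*((i:ℕ)+1)) := by
  classical
  have hm : 0 < n+1 := Nat.succ_pos n
  have hcard : ((VTq q n b).card : ℂ)
      = ∑ s : Fin n → Fin q,
          if ((n+1:ℕ):ℤ) ∣ (∑ i : Fin n, ((i.val + 1) * (s i).val : ℕ) : ℤ) - b then 1 else 0 := by
    rw [VTq, Finset.card_filter]
    push_cast
    refine Finset.sum_congr rfl fun s _ => ?_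
    congr 1
  rw [hcard, Finset.mul_sum]
  have step1 : ∀ s : Fin n → Fin q,
      ((n+1:ℕ):ℂ) * (if ((n+1:ℕ):ℤ) ∣ (∑ i : Fin n, ((i.val + 1) * (s i).val : ℕ) : ℤ) - b then (1:ℂ) else 0)
      = ∑ k ∈ range (n+1), eC (n+1) ((k:ℤ) * ((∑ i : Fin n, ((i.val + 1) * (s i).val : ℕ) : ℤ) - b)) := by
    intro s
    rw [sum_eC (n+1) hm]
    split_ifs <;> simp
  rw [Finset.sum_congr rfl fun s _ => step1 s, Finset.sum_comm]
  refine Finset.sum_congr rfl fun k _ => ?_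
  have step2 : ∀ s : Fin n → Fin q,
      eC (n+1) ((k:ℤ) * ((∑ i : Fin n, ((i.val + 1) * (s i).val : ℕ) : ℤ) - b))
      = eC (n+1) (-((k:ℤ)*b)) * ∏ i : Fin n, eC (n+1) (((k:ℤ)*((i:ℕ)+1)) * ((s i).val : ℕ)) := by
    intro s
    have harg : (k:ℤ) * ((∑ i : Fin n, ((i.val + 1) * (s i).val : ℕ) : ℤ) - b)
        = -((k:ℤ)*b) + ∑ i : Fin n, ((k:ℤ)*((i:ℕ)+1)) * ((s i).val : ℕ) := by
      push_cast
      rw [mul_sub, Finset.mul_sum, sub_eq_neg_add]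
      congr 1
      exact Finset.sum_congr rfl fun i _ => by ring
    rw [harg, eC_add, eC_sum]
  rw [Finset.sum_congr rfl fun s _ => step2 s, ← Finset.mul_sum]
  congr 1
  have hGC : ∀ i : Fin n, GC q (n+1) ((k:ℤ)*((i:ℕ)+1))
      = ∑ v : Fin q, eC (n+1) (((k:ℤ)*((i:ℕ)+1)) * ((v:ℕ):ℤ)) := by
    intro i
    rw [GC, ← Fin.sum_univ_eq_sum_range (fun v => eC (n+1) (((k:ℤ)*((i:ℕ)+1)) * (v:ℤ))) q]
  rw [Finset.prod_congr rfl fun i _ => hGC i, ← Fintype.piFinset_univ, Finset.prod_univ_sum]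


lemma eC_cancel (g d : ℕ) (hg : 0 < g) (t : ℤ) : eC (g*d) ((g:ℤ)*t) = eC d t := by
  unfold eC
  congr 1
  rcases Nat.eq_zero_or_pos d with rfl | hd
  · simp
  · have hgC : (g:ℂ) ≠ 0 := Nat.cast_ne_zero.2 hg.ne'
    have hdC : (d:ℂ) ≠ 0 := Nat.cast_ne_zero.2 hd.ne'
    push_cast
    field_simp

lemma ramanujan_eq (d : ℕ) (hd : 0 < d) (b : ℤ) :
    ramanujan d b = ∑ j ∈ (range d).filter (fun j => Nat.gcd j d = 1), eC d (-((j:ℤ)*b)) := by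
  have hgcd_mod : ∀ x, Nat.gcd (x % d) d = Nat.gcd x d := fun x => by
    rw [← Nat.gcd_rec, Nat.gcd_comm]
  unfold ramanujan
  refine Finset.sum_nbij' (i := fun j => (d - j) % d) (j := fun j' => d - j') ?_ ?_ ?_ ?_ ?_
  · intro a ha
    rw [Finset.mem_filter, Finset.mem_Icc] at ha
    rw [Finset.mem_filter, Finset.mem_range]
    exact ⟨Nat.mod_lt _ hd, by
      show Nat.gcd ((d - a) % d) d = 1
      rw [hgcd_mod, Nat.gcd_self_sub_left ha.1.2, ha.2]⟩
  · intro a ha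
    rw [Finset.mem_filter, Finset.mem_range] at ha
    rw [Finset.mem_filter, Finset.mem_Icc]
    have h1 : Nat.gcd (d - a) d = 1 := by
      rw [Nat.gcd_self_sub_left (le_of_lt ha.1)]
      exact ha.2
    have h2 : 1 ≤ d - a := by
      by_contra hc
      have : a = d := by omega
      omega
    exact ⟨⟨h2, Nat.sub_le _ _⟩, h1⟩
  · intro a ha
    rw [Finset.mem_filter, Finset.mem_Icc] at ha
    show d - ((d - a) % d) = a
    rcases eq_or_lt_of_le ha.1.2 with rfl | hlt
    · have hd1 : a = 1 := by have := ha.2; rwa [Nat.gcd_self] at this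
      simp [hd1]
    · rw [Nat.mod_eq_of_lt (by omega)]
      omega
  · intro a ha
    rw [Finset.mem_filter, Finset.mem_range] at ha
    show (d - (d - a)) % d = a
    rw [Nat.sub_sub_self (le_of_lt ha.1), Nat.mod_eq_of_lt ha.1]
  · intro a ha
    rw [Finset.mem_filter, Finset.mem_Icc] at ha
    show Complex.exp (2 * Real.pi * Complex.I * ((a : ℂ) * b) / d) = eC d (-(((((d - a) % d : ℕ)):ℤ)*b))
    rcases eq_or_lt_of_le ha.1.2 with rfl | hlt
    · have hd1 : a = 1 := by have := ha.2; rwa [Nat.gcd_self] at this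
      subst hd1
      have : ((1 - 1) % 1 : ℕ) = 0 := by norm_num
      rw [this]
      norm_num [eC_zero]
      rw [show 2*(Real.pi:ℂ)*Complex.I*(b:ℂ) = (b:ℂ)*(2*Real.pi*Complex.I) by ring]
      exact Complex.exp_int_mul_two_pi_mul_I b
    · rw [Nat.mod_eq_of_lt (by omega)]
      have hcast : -(((d - a : ℕ):ℤ)*b) = (a:ℤ)*b + (d:ℤ)*(-b) := by
        have h3 : ((d - a : ℕ):ℤ) = (d:ℤ) - a := by
          push_cast [Nat.cast_sub (le_of_lt hlt)]; ring
        rw [h3]; ring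
      rw [hcast, eC_add, eC_mul_self, mul_one]
      unfold eC
      congr 1
      push_cast
      ring



lemma fiber_sum (m d : ℕ) (hm : 0 < m) (hdm : d ∣ m) (hd : 0 < d) (b : ℤ) :
    ∑ k ∈ (range m).filter (fun k => Nat.gcd k m = m / d), eC m (-((k:ℤ)*b))
      = ramanujan d b := by
  set g := m / d with hgdef
  have hg : 0 < g := Nat.div_pos (Nat.le_of_dvd hm hdm) hd
  have hgd : g * d = m := by
    exact Nat.div_mul_cancel hdm
  have hmg : m / g = d := by rw [← hgd, Nat.mul_div_cancel_left d hg]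
  rw [ramanujan_eq d hd b]
  refine Finset.sum_nbij' (i := fun k => k / g) (j := fun j => g * j) ?_ ?_ ?_ ?_ ?_
  · intro k hk
    rw [Finset.mem_filter, Finset.mem_range] at hk
    rw [Finset.mem_filter, Finset.mem_range]
    constructor
    · show k / g < d
      rw [Nat.div_lt_iff_lt_mul hg]
      calc k < m := hk.1
        _ = d * g := by rw [← hgd]; ring
    · show Nat.gcd (k / g) d = 1
      have := Nat.coprime_div_gcd_div_gcd (show 0 < Nat.gcd k m by rw [hk.2]; exact hg)
      rwa [hk.2, hmg] at this
  · intro j hj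
    rw [Finset.mem_filter, Finset.mem_range] at hj
    rw [Finset.mem_filter, Finset.mem_range]
    constructor
    · show g * j < m
      rw [← hgd]
      exact (Nat.mul_lt_mul_left hg).2 hj.1
    · show Nat.gcd (g * j) m = g
      rw [← hgd, Nat.gcd_mul_left, hj.2, mul_one]
  · intro k hk
    rw [Finset.mem_filter, Finset.mem_range] at hk
    show g * (k / g) = k
    have hdvd : g ∣ k := by rw [← hk.2]; exact Nat.gcd_dvd_left k m
    exact Nat.mul_div_cancel' hdvd
  · intro j hj
    show (g * j) / g = j
    exact Nat.mul_div_cancel_left j hg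
  · intro k hk
    rw [Finset.mem_filter, Finset.mem_range] at hk
    show eC m (-((k:ℤ)*b)) = eC d (-(((k / g : ℕ):ℤ)*b))
    have hdvd : g ∣ k := by rw [← hk.2]; exact Nat.gcd_dvd_left k m
    have h1 : -((k:ℤ)*b) = (g:ℤ) * (-(((k / g : ℕ):ℤ)*b)) := by
      have : (k:ℤ) = (g:ℤ) * ((k / g : ℕ):ℤ) := by
        exact_mod_cast congrArg (fun x : ℕ => (x:ℤ)) (Nat.mul_div_cancel' hdvd).symm
      rw [this]; ring
    rw [h1, ← hgd, eC_cancel g d hg]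


theorem stmt_15 (q n : ℕ) (hq : 1 ≤ q) (hn : 1 ≤ n) (b : ℤ) :
    ((VTq q n b).card : ℂ) =
      (1 / (q * (n + 1))) *
        ∑ d ∈ (n + 1).divisors.filter (fun d => Nat.gcd d q = 1),
          ramanujan d b * q ^ ((n + 1) / d) := by
  have hq0 : 0 < q := hq
  have hm0 : 0 < n + 1 := Nat.succ_pos n
  set m := n + 1 with hmdef
  have key := card_VTq q n hq0 b
  -- per-k evaluation
  have step : ∀ k ∈ range m,
      (q:ℂ) * (eC m (-((k:ℤ)*b)) * ∏ i : Fin n, GC q m ((k:ℤ)*((i:ℕ)+1)))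
      = (if Nat.gcd (m / Nat.gcd k m) q = 1
          then eC m (-((k:ℤ)*b)) * (q:ℂ)^(Nat.gcd k m) else 0) := by
    intro k _
    have hsplit : ∏ i ∈ range m, GC q m ((k:ℤ)*i)
        = (∏ i : Fin n, GC q m ((k:ℤ)*((i:ℕ)+1))) * q := by
      rw [hmdef, Finset.prod_range_succ' (fun i => GC q m ((k:ℤ)*i)) n]
      congr 1
      · rw [Fin.prod_univ_eq_prod_range (fun i => GC q m ((k:ℤ)*((i:ℕ)+1))) n]
        refine Finset.prod_congr rfl fun i _ => ?_
        norm_cast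
      · rw [show ((k:ℤ)*((0:ℕ):ℤ)) = 0 by norm_num, GC_zero]
    have hprod := prod_GC q m k hq0 hm0
    rw [hsplit] at hprod
    have hgpos : 0 < Nat.gcd k m := Nat.gcd_pos_of_pos_right k hm0
    split_ifs with hc
    · rw [if_pos hc] at hprod
      linear_combination eC m (-((k:ℤ)*b)) * hprod
    · rw [if_neg hc] at hprod
      rw [zero_pow hgpos.ne'] at hprod
      have : (∏ i : Fin n, GC q m ((k:ℤ)*((i:ℕ)+1))) = 0 := by
        rcases mul_eq_zero.1 hprod with h | h
        · exact h
        · exact absurd h (Nat.cast_ne_zero.2 hq0.ne')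
      rw [this]
      ring
  have big : (q:ℂ) * ((m:ℕ):ℂ) * ((VTq q n b).card : ℂ)
      = ∑ k ∈ range m, (if Nat.gcd (m / Nat.gcd k m) q = 1
          then eC m (-((k:ℤ)*b)) * (q:ℂ)^(Nat.gcd k m) else 0) := by
    rw [mul_assoc, key, Finset.mul_sum]
    exact Finset.sum_congr rfl step
  -- fiberwise
  have hmaps : ∀ k ∈ range m, m / Nat.gcd k m ∈ m.divisors := by
    intro k _
    rw [Nat.mem_divisors]
    exact ⟨Nat.div_dvd_of_dvd (Nat.gcd_dvd_right k m), hm0.ne'⟩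
  have hfw := Finset.sum_fiberwise_of_maps_to hmaps
    (fun k => (if Nat.gcd (m / Nat.gcd k m) q = 1
          then eC m (-((k:ℤ)*b)) * (q:ℂ)^(Nat.gcd k m) else 0))
  rw [← hfw] at big
  have inner : ∀ d ∈ m.divisors,
      (∑ k ∈ (range m).filter (fun k => m / Nat.gcd k m = d),
        (if Nat.gcd (m / Nat.gcd k m) q = 1
          then eC m (-((k:ℤ)*b)) * (q:ℂ)^(Nat.gcd k m) else 0))
      = (if Nat.gcd d q = 1 then ramanujan d b * (q:ℂ)^(m/d) else 0) := by
    intro d hd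
    rw [Nat.mem_divisors] at hd
    have hdpos : 0 < d := Nat.pos_of_dvd_of_pos hd.1 hm0
    have hfilter_eq : (range m).filter (fun k => m / Nat.gcd k m = d)
        = (range m).filter (fun k => Nat.gcd k m = m / d) := by
      apply Finset.filter_congr
      intro k _
      constructor
      · intro h
        rw [← h, Nat.div_div_self (Nat.gcd_dvd_right k m) hm0.ne']
      · intro h
        rw [h, Nat.div_div_self hd.1 hm0.ne']
    rw [hfilter_eq]
    have hterm : ∀ k ∈ (range m).filter (fun k => Nat.gcd k m = m / d),
        (if Nat.gcd (m / Nat.gcd k m) q = 1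
          then eC m (-((k:ℤ)*b)) * (q:ℂ)^(Nat.gcd k m) else 0)
        = (if Nat.gcd d q = 1 then eC m (-((k:ℤ)*b)) * (q:ℂ)^(m/d) else 0) := by
      intro k hk
      rw [Finset.mem_filter] at hk
      rw [hk.2, Nat.div_div_self hd.1 hm0.ne']
    rw [Finset.sum_congr rfl hterm]
    split_ifs with hc
    · rw [← fiber_sum m d hm0 hd.1 hdpos b, Finset.sum_mul]
    · exact Finset.sum_const_zero
  rw [Finset.sum_congr rfl inner, ← Finset.sum_filter] at big
  -- finish
  have hne : (q:ℂ) * ((n:ℂ)+1) ≠ 0 := by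
    apply mul_ne_zero (Nat.cast_ne_zero.2 hq0.ne')
    have : ((n:ℂ)+1) = ((m:ℕ):ℂ) := by rw [hmdef]; push_cast; ring
    rw [this]
    exact Nat.cast_ne_zero.2 hm0.ne'
  have hcast : ((m:ℕ):ℂ) = (n:ℂ)+1 := by rw [hmdef]; push_cast; ring
  rw [hcast] at big
  rw [one_div, ← big]
  field_simp
  rw [mul_div_cancel_right₀ _ (Nat.cast_ne_zero.2 hq0.ne')]
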